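/- arXiv:2307.00582 — 3 statements merged into one kernel-verified Lean document; each statement's English description precedes it below -/
import Mathlib

section
/- Let M, C, K be real symmetric n×n matrices with M positive definite, and suppose the quadratic pencil P(λ) = λ²M + λC + K has 2n eigenpairs (λᵢ, xᵢ) with Λ = diag(λ₁,…,λ_{2n}), X = [x₁,…,x_{2n}]. Then Λ Xᵀ C X Λ + Λ Xᵀ K X + Xᵀ K X Λ is a diagonal matrix. -/
/-!
For eigenpairs `(λᵢ, xᵢ)`, `(λⱼ, xⱼ)` of the pencil, pairing `P(λⱼ) xⱼ = 0` with `xᵢ` and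
`P(λᵢ) xᵢ = 0` with `xⱼ` gives, by symmetry of `M, C, K`, two quadratic equations
`λ² m + λ c + k = 0` with the same coefficients `m = xᵢᵀ M xⱼ`, `c = xᵢᵀ C xⱼ`, `k = xᵢᵀ K xⱼ`
and the distinct roots `λᵢ, λⱼ`. Eliminating `m` between them gives the `(i, j)` entry
`λᵢ c λⱼ + (λᵢ + λⱼ) k = 0`.
-/

open Matrix

/-- Complexification of a real matrix. -/
def mc {n m : ℕ} (A : Matrix (Fin n) (Fin m) ℝ) : Matrix (Fin n) (Fin m) ℂ :=
  A.map Complex.ofReal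

namespace Matrix

variable {n m R : Type*} [Fintype n]

theorem IsSymm.transpose_mul_mul [CommSemiring R] {B : Matrix n n R} (hB : B.IsSymm)
    (X : Matrix n m R) : (Xᵀ * B * X).IsSymm := by
  rw [IsSymm, transpose_mul, transpose_mul, transpose_transpose, hB.eq, Matrix.mul_assoc]

theorem transpose_mul_mul_apply [CommSemiring R] (B : Matrix n n R) (X : Matrix n m R)
    (i j : m) : (Xᵀ * B * X) i j = Xᵀ i ⬝ᵥ (B *ᵥ Xᵀ j) := by
  rw [Matrix.mul_assoc, mul_apply, dotProduct]
  rfl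

theorem transpose_mul_mul_pencil_apply_eq_zero [CommRing R] {M C K : Matrix n n R}
    {lam : m → R} {X : Matrix n m R}
    (heig : ∀ j, (lam j ^ 2 • M + lam j • C + K) *ᵥ (fun r => X r j) = 0) (i j : m) :
    lam j ^ 2 * (Xᵀ * M * X) i j + lam j * (Xᵀ * C * X) i j + (Xᵀ * K * X) i j = 0 := by
  have h := congrArg (Xᵀ i ⬝ᵥ ·) (heig j)
  simp only [add_mulVec, smul_mulVec, dotProduct_add, dotProduct_smul, smul_eq_mul,
    dotProduct_zero] at h
  simp only [transpose_mul_mul_apply]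
  exact h

end Matrix

theorem quadratic_roots_cross_identity {F : Type*} [Field F] {a b m c k : F} (hab : a ≠ b)
    (ha : a ^ 2 * m + a * c + k = 0) (hb : b ^ 2 * m + b * c + k = 0) :
    a * c * b + a * k + k * b = 0 := by
  -- Vieta's relations `a + b = -c / m`, `a * b = k / m`, cleared of the denominator `m`.
  have hsum : (a + b) * m + c = 0 := by
    have h : (a - b) * ((a + b) * m + c) = 0 := by linear_combination ha - hb
    exact (mul_eq_zero.mp h).resolve_left (sub_ne_zero.mpr hab)
  linear_combination b * ha + a * hb - a * b * hsum

theorem isDiag_pencil_eigenvector_form {F n m : Type*} [Field F] [Fintype n] [Fintype m]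
    [DecidableEq m]
    {M C K : Matrix n n F} (hM : M.IsSymm) (hC : C.IsSymm) (hK : K.IsSymm)
    {lam : m → F} (hdist : Function.Injective lam) {X : Matrix n m F}
    (heig : ∀ j, (lam j ^ 2 • M + lam j • C + K) *ᵥ (fun r => X r j) = 0) :
    (diagonal lam * Xᵀ * C * X * diagonal lam + diagonal lam * (Xᵀ * K * X)
      + Xᵀ * K * X * diagonal lam).IsDiag := by
  intro i j hij
  have hi := transpose_mul_mul_pencil_apply_eq_zero heig j i
  rw [(hM.transpose_mul_mul X).apply, (hC.transpose_mul_mul X).apply,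
    (hK.transpose_mul_mul X).apply] at hi
  have hassoc : diagonal lam * Xᵀ * C * X = diagonal lam * (Xᵀ * C * X) := by
    simp only [Matrix.mul_assoc]
  rw [hassoc, Matrix.add_apply, Matrix.add_apply, mul_diagonal, mul_diagonal, diagonal_mul,
    diagonal_mul]
  exact quadratic_roots_cross_identity (hdist.ne hij) hi
    (transpose_mul_mul_pencil_apply_eq_zero heig i j)

theorem stmt_1_general (n : ℕ) (M C K : Matrix (Fin n) (Fin n) ℝ)
    (hM : M.IsSymm) (hC : C.IsSymm) (hK : K.IsSymm)
    (lam : Fin (2 * n) → ℂ) (hdist : Function.Injective lam)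
    (X : Matrix (Fin n) (Fin (2 * n)) ℂ)
    (heig : ∀ i, ((lam i) ^ 2 • mc M + lam i • mc C + mc K) *ᵥ (fun r => X r i) = 0) :
    (Matrix.diagonal lam * Xᵀ * mc C * X * Matrix.diagonal lam + Matrix.diagonal lam * (Xᵀ * mc K * X) + Xᵀ * mc K * X * Matrix.diagonal lam).IsDiag :=
  isDiag_pencil_eigenvector_form (hM.map _) (hC.map _) (hK.map _) hdist heig

theorem stmt_1 (n : ℕ) (M C K : Matrix (Fin n) (Fin n) ℝ)
    (hM : M.IsSymm) (hC : C.IsSymm) (hK : K.IsSymm) (hMpd : M.PosDef)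
    (lam : Fin (2 * n) → ℂ) (hdist : Function.Injective lam)
    (X : Matrix (Fin n) (Fin (2 * n)) ℂ)
    (heig : ∀ i, ((lam i) ^ 2 • mc M + lam i • mc C + mc K) *ᵥ (fun r => X r i) = 0) :
    (Matrix.diagonal lam * Xᵀ * mc C * X * Matrix.diagonal lam + Matrix.diagonal lam * (Xᵀ * mc K * X) + Xᵀ * mc K * X * Matrix.diagonal lam).IsDiag :=
  stmt_1_general n M C K hM hC hK lam hdist X heig
end

section
/- Let λ be an eigenvalue of the pencil λ²M + λC + K with eigenvector x, μ ≠ λ, and let y satisfy (μ²M + μ C_k + K_k)y = b_k, where C_k = C − Σ_{i<k} bᵢfᵢᵀ e^{−μτ} and K_k = K − Σ_{i<k} bᵢgᵢᵀ e^{−μτ}. Then xᵀ(μM + λM + C)y = (xᵀb_k)/(μ − λ) + e^{−μτ} · xᵀ(Σ_{i<k} bᵢ(μ fᵢᵀ + gᵢᵀ)) y / (μ − λ). -/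
/-
Write `P(s) = s²M + sC + K`. Since `P(λ)` is symmetric and `P(λ)x = 0`, we get `xᵀP(λ)y = 0`, while
`P(μ) - P(λ) = (μ - λ)((μ + λ)M + C)`; hence `(μ - λ) xᵀ((μ + λ)M + C)y = xᵀP(μ)y`. Finally
`P(μ) = μ²M + μC_k + K_k + e^{-μτ} Σᵢ bᵢ(μfᵢ + gᵢ)ᵀ`, and `(μ²M + μC_k + K_k)y = b_k`.
-/

open Matrix

/-- Complexification of a real vector. -/
def vc {n : ℕ} (v : Fin n → ℝ) : Fin n → ℂ := fun i => (v i : ℂ)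

namespace Matrix

variable {ι κ R : Type*} [CommRing R]

theorem quadratic_pencil_sub (M C K : Matrix ι ι R) (lam mu : R) :
    (mu ^ 2 • M + mu • C + K) - (lam ^ 2 • M + lam • C + K) = (mu - lam) • ((mu + lam) • M + C) := by
  module

theorem sum_vecMulVec_smul_add {q : Type*} [Fintype q] (b : q → κ → R) (f g : q → ι → R) (mu : R) :
    ∑ i, vecMulVec (b i) (mu • f i + g i) =
      mu • ∑ i, vecMulVec (b i) (f i) + ∑ i, vecMulVec (b i) (g i) := by
  simp only [vecMulVec_add, vecMulVec_smul, Finset.sum_add_distrib, Finset.smul_sum]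

variable [Fintype ι]

theorem IsSymm.dotProduct_mulVec_comm {A : Matrix ι ι R} (hA : A.IsSymm) (x y : ι → R) :
    x ⬝ᵥ (A *ᵥ y) = (A *ᵥ x) ⬝ᵥ y := by
  rw [dotProduct_mulVec, ← mulVec_transpose, hA.eq]

theorem sub_mul_dotProduct_eq_of_quadratic_eigenvector {M C K : Matrix ι ι R}
    (hM : M.IsSymm) (hC : C.IsSymm) (hK : K.IsSymm) {lam : R} {x : ι → R}
    (hx : (lam ^ 2 • M + lam • C + K) *ᵥ x = 0) (mu : R) (y : ι → R) :
    (mu - lam) * (x ⬝ᵥ (((mu + lam) • M + C) *ᵥ y)) = x ⬝ᵥ ((mu ^ 2 • M + mu • C + K) *ᵥ y) := by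
  have hsymm : (lam ^ 2 • M + lam • C + K).IsSymm := ((hM.smul _).add (hC.smul _)).add hK
  have hlam : x ⬝ᵥ ((lam ^ 2 • M + lam • C + K) *ᵥ y) = 0 := by
    rw [hsymm.dotProduct_mulVec_comm, hx, zero_dotProduct]
  rw [← smul_eq_mul, ← dotProduct_smul, ← smul_mulVec, ← quadratic_pencil_sub M C K lam mu,
    sub_mulVec, dotProduct_sub, hlam, sub_zero]

end Matrix

theorem stmt_12_general (n q : ℕ) (M C K : Matrix (Fin n) (Fin n) ℝ)
    (hM : M.IsSymm) (hC : C.IsSymm) (hK : K.IsSymm)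
    (b f g : Fin q → Fin n → ℝ) (bk : Fin n → ℝ) (τ : ℝ)
    (lam mu : ℂ) (hne : mu ≠ lam)
    (x y : Fin n → ℂ)
    (hx : (lam ^ 2 • mc M + lam • mc C + mc K) *ᵥ x = 0)
    (Ck Kk : Matrix (Fin n) (Fin n) ℂ)
    (hCk : Ck = mc C - Complex.exp (-mu * τ) • ∑ i, vecMulVec (vc (b i)) (vc (f i)))
    (hKk : Kk = mc K - Complex.exp (-mu * τ) • ∑ i, vecMulVec (vc (b i)) (vc (g i)))
    (hy : (mu ^ 2 • mc M + mu • Ck + Kk) *ᵥ y = vc bk) :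
    x ⬝ᵥ (((mu + lam) • mc M + mc C) *ᵥ y) =
      (vc bk ⬝ᵥ x) / (mu - lam) +
        Complex.exp (-mu * τ) *
          (x ⬝ᵥ ((∑ i, vecMulVec (vc (b i)) (mu • vc (f i) + vc (g i))) *ᵥ y)) / (mu - lam) := by
  set e := Complex.exp (-mu * τ)
  have hpencil : mu ^ 2 • mc M + mu • mc C + mc K = (mu ^ 2 • mc M + mu • Ck + Kk) +
      e • ∑ i, vecMulVec (vc (b i)) (mu • vc (f i) + vc (g i)) := by
    rw [hCk, hKk, sum_vecMulVec_smul_add]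
    module
  have key := sub_mul_dotProduct_eq_of_quadratic_eigenvector
    (M := mc M) (C := mc C) (K := mc K) (hM.map _) (hC.map _) (hK.map _) hx mu y
  rw [hpencil, add_mulVec (mu ^ 2 • mc M + mu • Ck + Kk), dotProduct_add x, hy, smul_mulVec,
    dotProduct_smul, smul_eq_mul, dotProduct_comm x (vc bk)] at key
  field_simp [sub_ne_zero.mpr hne]
  linear_combination key

theorem stmt_12 (n q : ℕ) (M C K : Matrix (Fin n) (Fin n) ℝ)
    (hM : M.IsSymm) (hC : C.IsSymm) (hK : K.IsSymm)
    (b f g : Fin q → Fin n → ℝ) (bk : Fin n → ℝ) (τ : ℝ) (hτ : 0 < τ)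
    (lam mu : ℂ) (hne : mu ≠ lam)
    (x y : Fin n → ℂ)
    (hx : (lam ^ 2 • mc M + lam • mc C + mc K) *ᵥ x = 0)
    (Ck Kk : Matrix (Fin n) (Fin n) ℂ)
    (hCk : Ck = mc C - Complex.exp (-mu * τ) • ∑ i, vecMulVec (vc (b i)) (vc (f i)))
    (hKk : Kk = mc K - Complex.exp (-mu * τ) • ∑ i, vecMulVec (vc (b i)) (vc (g i)))
    (hy : (mu ^ 2 • mc M + mu • Ck + Kk) *ᵥ y = vc bk) :
    x ⬝ᵥ (((mu + lam) • mc M + mc C) *ᵥ y) =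
      (vc bk ⬝ᵥ x) / (mu - lam) +
        Complex.exp (-mu * τ) *
          (x ⬝ᵥ ((∑ i, vecMulVec (vc (b i)) (mu • vc (f i) + vc (g i))) *ᵥ y)) / (mu - lam) :=
  stmt_12_general n q M C K hM hC hK b f g bk τ lam mu hne x y hx Ck Kk hCk hKk hy
end

section
/- Let λ₁,…,λ_p, μ₁,…,μ_p be pairwise distinct complex numbers and suppose bᵀxⱼ ≠ 0 for all j. Then the solution β = [β₁,…,β_p]ᵀ of the linear system βᵀH = 𝟙ᵀe^{τΣ₁}, where H = diag(bᵀx₁,…,bᵀx_p)·Ĥ with Ĥ_{ij} = 1/(μⱼ − λᵢ), is given explicitly by βⱼ = (1/(bᵀxⱼ)) · [∏_{k=1}^p (λⱼ − μ_k) / ∏_{k≠j} (λⱼ − λ_k)] · Σ_{i=1}^p [∏_{k=1}^p (μᵢ − λ_k)] e^{τμᵢ} / [(λⱼ − μᵢ) ∏_{k≠i} (μᵢ − μ_k)]. -/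
/-!
`H` is the Cauchy matrix `C i j = 1 / (μ_j - λ_i)` with its rows scaled by `bᵀxᵢ`, so `β` is read
off from the classical explicit inverse of `C`. That inverse is verified by partial fractions:
expanding `∏_{k ≠ l} (z - μ_k) / ∏_k (z - λ_k)` (numerator of degree `p - 1`) over the poles `λ_m`
and evaluating at `z = μ_i` gives, up to a factor depending only on `i`, the `(i, l)` entry of
the candidate inverse times `C`, while the left side vanishes unless `i = l`.
-/

open Finset Polynomial

namespace Lagrange

variable {F ι : Type*} [Field F] [DecidableEq ι] {s : Finset ι} {v : ι → F} {x : F}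

theorem eval_eq_eval_nodal_mul_sum_of_degree_lt {g : F[X]} (hvs : Set.InjOn v s)
    (hg : g.degree < #s) (hx : ∀ i ∈ s, x ≠ v i) :
    g.eval x = (nodal s v).eval x * ∑ i ∈ s, nodalWeight s v i * (x - v i)⁻¹ * g.eval (v i) := by
  conv_lhs => rw [eq_interpolate hvs hg]
  exact eval_interpolate_not_at_node _ hx

end Lagrange

section Cauchy

variable {K ι : Type*} [Field K] [Fintype ι] [DecidableEq ι]

def cauchyWeight (a c : ι → K) (j : ι) : K :=
  (∏ k, (a j - c k)) / ∏ k ∈ univ.erase j, (a j - a k)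

def cauchyMatrix (lam mu : ι → K) : Matrix ι ι K :=
  Matrix.of fun i j => 1 / (mu j - lam i)

def cauchyMatrixInv (lam mu : ι → K) : Matrix ι ι K :=
  Matrix.of fun i j => cauchyWeight mu lam i * cauchyWeight lam mu j / (lam j - mu i)

variable {lam mu : ι → K}

theorem cauchyWeight_ne_zero {a c : ι → K} (h : Function.Injective (Sum.elim a c)) (j : ι) :
    cauchyWeight a c j ≠ 0 := by
  have ha : Function.Injective a := h.comp Sum.inl_injective
  refine div_ne_zero (prod_ne_zero_iff.mpr fun k _ => sub_ne_zero.mpr fun hjk => ?_)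
    (prod_ne_zero_iff.mpr fun k hk => sub_ne_zero.mpr fun hjk => ?_)
  · exact Sum.inl_ne_inr (h hjk)
  · exact (mem_erase.mp hk).1 (ha hjk).symm

theorem sum_cauchyWeight_div (h : Function.Injective (Sum.elim lam mu)) (i l : ι) :
    ∑ m, cauchyWeight lam mu m / ((mu i - lam m) * (lam m - mu l)) =
      if i = l then (cauchyWeight mu lam i)⁻¹ else 0 := by
  have hlam : Function.Injective lam := h.comp Sum.inl_injective
  have hlm : ∀ m k, lam m ≠ mu k := fun m k e => Sum.inl_ne_inr (h e)
  have hx : ∀ m ∈ (univ : Finset ι), mu i ≠ lam m := fun m _ e => hlm m i e.symm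
  have hdeg : (Lagrange.nodal (univ.erase l) mu).degree < #(univ : Finset ι) := by
    rw [Lagrange.degree_nodal, card_erase_of_mem (mem_univ l)]
    exact_mod_cast Nat.sub_lt (card_pos.mpr ⟨l, mem_univ l⟩) one_pos
  have key := Lagrange.eval_eq_eval_nodal_mul_sum_of_degree_lt hlam.injOn hdeg hx
  simp only [Lagrange.eval_nodal] at key
  have hterm : ∀ m, cauchyWeight lam mu m / ((mu i - lam m) * (lam m - mu l)) =
      Lagrange.nodalWeight univ lam m * (mu i - lam m)⁻¹ * ∏ k ∈ univ.erase l, (lam m - mu k) := by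
    intro m
    have := sub_ne_zero.mpr (hlm m l)
    rw [cauchyWeight, ← mul_prod_erase univ _ (mem_univ l), Lagrange.nodalWeight,
      prod_inv_distrib]
    field_simp
  have hP : ∏ k, (mu i - lam k) ≠ 0 :=
    prod_ne_zero_iff.mpr fun k _ => sub_ne_zero.mpr (hx k (mem_univ k))
  rw [sum_congr rfl fun m _ => hterm m, eq_div_of_mul_eq hP ((mul_comm _ _).trans key.symm)]
  split_ifs with hil
  · rw [hil, cauchyWeight, inv_div]
  · rw [prod_eq_zero (mem_erase.mpr ⟨hil, mem_univ i⟩) (sub_self _), zero_div]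

theorem cauchyMatrixInv_mul_cauchyMatrix (h : Function.Injective (Sum.elim lam mu)) :
    cauchyMatrixInv lam mu * cauchyMatrix lam mu = 1 := by
  ext i l
  have hterm : ∀ m, cauchyMatrixInv lam mu i m * cauchyMatrix lam mu m l =
      cauchyWeight mu lam i * (cauchyWeight lam mu m / ((mu i - lam m) * (lam m - mu l))) := by
    intro m
    simp only [cauchyMatrixInv, cauchyMatrix, Matrix.of_apply]
    rw [div_mul_div_comm, mul_one, mul_div_assoc,
      show (lam m - mu i) * (mu l - lam m) = (mu i - lam m) * (lam m - mu l) by ring]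
  rw [Matrix.mul_apply, sum_congr rfl fun m _ => hterm m, ← mul_sum, sum_cauchyWeight_div h,
    Matrix.one_apply]
  have hB := cauchyWeight_ne_zero (Sum.elim_swap ▸ h.comp Sum.swap_leftInverse.injective) i
  split_ifs <;> simp [hB]

theorem eq_vecMul_cauchyMatrixInv (h : Function.Injective (Sum.elim lam mu)) {y e : ι → K}
    (hy : Matrix.vecMul y (cauchyMatrix lam mu) = e) :
    y = Matrix.vecMul e (cauchyMatrixInv lam mu) := by
  rw [← hy, Matrix.vecMul_vecMul, mul_eq_one_comm.mp (cauchyMatrixInv_mul_cauchyMatrix h),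
    Matrix.vecMul_one]

end Cauchy

open Matrix

theorem stmt_16_general (n p : ℕ) (lam mu : Fin p → ℂ)
    (hdist : Function.Injective (Sum.elim lam mu : Fin p ⊕ Fin p → ℂ))
    (b : Fin n → ℝ) (x : Fin p → Fin n → ℂ)
    (hb : ∀ j, vc b ⬝ᵥ x j ≠ 0)
    (τ : ℝ)
    (H : Matrix (Fin p) (Fin p) ℂ)
    (hH : H = Matrix.diagonal (fun i => vc b ⬝ᵥ x i) *
      Matrix.of (fun i j : Fin p => 1 / (mu j - lam i)))
    (β : Fin p → ℂ)
    (hβ : Matrix.vecMul β H = fun j => Complex.exp (τ * mu j)) :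
    ∀ j, β j = (1 / (vc b ⬝ᵥ x j)) *
      ((∏ k, (lam j - mu k)) / ∏ k ∈ Finset.univ.erase j, (lam j - lam k)) *
      ∑ i, (∏ k, (mu i - lam k)) * Complex.exp (τ * mu i) /
        ((lam j - mu i) * ∏ k ∈ Finset.univ.erase i, (mu i - mu k)) := by
  intro j
  have hscaled : (fun i => β i * (vc b ⬝ᵥ x i)) =
      vecMul (fun i => Complex.exp (τ * mu i)) (cauchyMatrixInv lam mu) := by
    refine eq_vecMul_cauchyMatrixInv hdist ?_
    rw [← hβ, hH, ← vecMul_vecMul]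
    congr 1
    ext i
    exact (vecMul_diagonal β (fun i => vc b ⬝ᵥ x i) i).symm
  have hj : β j * vc b ⬝ᵥ x j = ∑ i, Complex.exp (τ * mu i) * cauchyMatrixInv lam mu i j :=
    congrFun hscaled j
  simp only [cauchyMatrixInv, of_apply] at hj
  rw [← mul_div_cancel_right₀ (β j) (hb j), hj, mul_sum, div_eq_mul_inv, sum_mul]
  refine sum_congr rfl fun i _ => ?_
  simp only [cauchyWeight, div_eq_mul_inv, mul_inv]
  ring

theorem stmt_16 (n p : ℕ) (lam mu : Fin p → ℂ)
    (hdist : Function.Injective (Sum.elim lam mu : Fin p ⊕ Fin p → ℂ))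
    (b : Fin n → ℝ) (x : Fin p → Fin n → ℂ)
    (hb : ∀ j, vc b ⬝ᵥ x j ≠ 0)
    (τ : ℝ) (hτ : 0 < τ)
    (H : Matrix (Fin p) (Fin p) ℂ)
    (hH : H = Matrix.diagonal (fun i => vc b ⬝ᵥ x i) *
      Matrix.of (fun i j : Fin p => 1 / (mu j - lam i)))
    (β : Fin p → ℂ)
    (hβ : Matrix.vecMul β H = fun j => Complex.exp (τ * mu j)) :
    ∀ j, β j = (1 / (vc b ⬝ᵥ x j)) *
      ((∏ k, (lam j - mu k)) / ∏ k ∈ Finset.univ.erase j, (lam j - lam k)) *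
      ∑ i, (∏ k, (mu i - lam k)) * Complex.exp (τ * mu i) /
        ((lam j - mu i) * ∏ k ∈ Finset.univ.erase i, (mu i - mu k)) :=
  stmt_16_general n p lam mu hdist b x hb τ H hH β hβ
end
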